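/- A weight balanced exponential tree on n leaves, where every node at level i ≥ 1 has weight in [(1/2)·w_i + 1, 2·w_i − 1] with w_i = c_1^{c_2^i} (c_2 > 1, c_1 ≥ 2), has height Θ(log_{c_2} log_{c_1} n). -/
import Mathlib


/-- A weight balanced exponential tree on `n` leaves with height `h ≥ 1`: the root (at
level `h`) has weight `n ≤ 2·w h − 1`, and since its children are at level `h − 1`, also
`n ≥ (1/2)·w (h-1) + 1`, where `w i = c₁^(c₂^i)`. Under these constraints the height is
`Θ(log_{c₂} log_{c₁} n)`: there are constants `C₁, C₂ > 0` and a threshold `N` such that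
for all such trees with `n ≥ N` leaves,
`C₁ · log_{c₂} (log_{c₁} n) ≤ h ≤ C₂ · log_{c₂} (log_{c₁} n)`. -/
theorem exp_tree_height (c₁ c₂ : ℝ) (hc₂ : 1 < c₂) (hc₁ : 2 ≤ c₁)
    (w : ℕ → ℝ) (hw : ∀ i : ℕ, w i = c₁ ^ ((c₂ ^ i : ℝ))) :
    ∃ C₁ C₂ : ℝ, 0 < C₁ ∧ 0 < C₂ ∧ ∃ N : ℕ, ∀ (n h : ℕ), 1 ≤ h → N ≤ n →
      (1 / 2) * w (h - 1) + 1 ≤ (n : ℝ) → (n : ℝ) ≤ 2 * w h - 1 →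
      C₁ * Real.logb c₂ (Real.logb c₁ n) ≤ (h : ℝ) ∧
      (h : ℝ) ≤ C₂ * Real.logb c₂ (Real.logb c₁ n) := by
  have hc₂0 : (0:ℝ) < c₂ := by linarith
  have hc₂1 : c₂ ≠ 1 := ne_of_gt hc₂
  have hc₁1 : (1:ℝ) < c₁ := by linarith
  have hc₁0 : (0:ℝ) < c₁ := by linarith
  have hc₁1' : c₁ ≠ 1 := ne_of_gt hc₁1
  set K := Real.logb c₂ 2 with hKdef
  have hK : 0 < K := Real.logb_pos hc₂ one_lt_two
  have hK1 : Real.logb c₁ 2 ≤ 1 := by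
    have h2 : Real.logb c₁ 2 ≤ Real.logb c₁ c₁ :=
      Real.logb_le_logb_of_le hc₁1 (by norm_num) hc₁
    rwa [Real.logb_self_eq_one hc₁1] at h2
  set h₀ : ℕ := ⌈2 + 2*K⌉₊ with hh₀def
  refine ⟨1/(1+K), 2, by positivity, by norm_num,
    ⌈2 * c₁ ^ ((c₂ ^ h₀ : ℝ))⌉₊ + 1, ?_⟩
  intro n h hh hN h1 h2
  rw [hw] at h1 h2
  -- force h ≥ h₀
  have hh0 : h₀ ≤ h := by
    by_contra hcon
    push_neg at hcon
    have hmono : c₁ ^ ((c₂ ^ h : ℝ)) ≤ c₁ ^ ((c₂ ^ h₀ : ℝ)) :=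
      Real.rpow_le_rpow_of_exponent_le (le_of_lt hc₁1)
        (pow_le_pow_right₀ (le_of_lt hc₂) (le_of_lt hcon))
    have hNr : 2 * c₁ ^ ((c₂ ^ h₀ : ℝ)) + 1 ≤ (n:ℝ) := by
      have hce := Nat.le_ceil (2 * c₁ ^ ((c₂ ^ h₀ : ℝ)))
      have hn' : ((⌈2 * c₁ ^ ((c₂ ^ h₀ : ℝ))⌉₊ + 1 : ℕ) : ℝ) ≤ (n:ℝ) := by
        exact_mod_cast hN
      push_cast at hn'
      linarith
    linarith
  have hhR : 2 + 2*K ≤ (h:ℝ) := by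
    have h1' : (2 + 2*K : ℝ) ≤ (h₀ : ℕ) := Nat.le_ceil _
    have h2' : (h₀:ℝ) ≤ (h:ℝ) := by exact_mod_cast hh0
    linarith
  have hh1R : (1:ℝ) ≤ (h:ℝ) := by exact_mod_cast hh
  have hcast : ((h-1:ℕ):ℝ) = (h:ℝ) - 1 := by
    push_cast [Nat.cast_sub hh]; ring
  set a : ℝ := c₂ ^ (h-1:ℕ) with hadef
  have harpow : a = c₂ ^ (((h-1:ℕ):ℝ)) := (Real.rpow_natCast c₂ (h-1)).symm
  have ha2 : 2 ≤ a := by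
    have hK2 : c₂ ^ (K:ℝ) = 2 := Real.rpow_logb hc₂0 hc₂1 (by norm_num)
    have : c₂ ^ (K:ℝ) ≤ c₂ ^ (((h-1:ℕ):ℝ)) := by
      apply Real.rpow_le_rpow_of_exponent_le (le_of_lt hc₂)
      rw [hcast]; linarith
    rw [hK2] at this; rw [harpow]; exact this
  have hlogba : Real.logb c₂ a = (h:ℝ) - 1 := by
    rw [harpow, Real.logb_rpow hc₂0 hc₂1, hcast]
  -- lower bound on logb c₁ n
  have hapos : (0:ℝ) < a := by linarith
  have hcapos : (0:ℝ) < c₁ ^ ((c₂ ^ (h-1) : ℝ)) := Real.rpow_pos_of_pos hc₁0 _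
  have hn_lb : (1/2) * c₁ ^ ((c₂ ^ (h-1) : ℝ)) < (n:ℝ) := by linarith
  have hn_pos : (0:ℝ) < (n:ℝ) := by nlinarith
  have hlog1 : a - Real.logb c₁ 2 ≤ Real.logb c₁ n := by
    have hm : Real.logb c₁ ((1/2) * c₁ ^ ((c₂ ^ (h-1) : ℝ))) ≤ Real.logb c₁ n :=
      Real.logb_le_logb_of_le hc₁1 (by positivity) (le_of_lt hn_lb)
    rw [Real.logb_mul (by norm_num) (ne_of_gt hcapos)] at hm
    rw [one_div, Real.logb_inv, Real.logb_rpow hc₁0 hc₁1'] at hm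
    linarith
  have hlogn_ge : a/2 ≤ Real.logb c₁ n := by linarith
  have hlogn_pos : (0:ℝ) < Real.logb c₁ n := by linarith
  -- upper bound on logb c₁ n
  have hb1 : (1:ℝ) ≤ c₂ ^ h := one_le_pow₀ (le_of_lt hc₂)
  have hlog2 : Real.logb c₁ n ≤ 2 * c₂ ^ h := by
    have hbpos : (0:ℝ) < c₁ ^ ((c₂ ^ h : ℝ)) := Real.rpow_pos_of_pos hc₁0 _
    have hm : Real.logb c₁ n ≤ Real.logb c₁ (2 * c₁ ^ ((c₂ ^ h : ℝ))) :=
      Real.logb_le_logb_of_le hc₁1 hn_pos (by linarith)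
    rw [Real.logb_mul (by norm_num) (ne_of_gt hbpos),
      Real.logb_rpow hc₁0 hc₁1'] at hm
    linarith
  -- logb c₂ bounds
  have hLlb : (h:ℝ) - 1 - K ≤ Real.logb c₂ (Real.logb c₁ n) := by
    have hm : Real.logb c₂ (a/2) ≤ Real.logb c₂ (Real.logb c₁ n) :=
      Real.logb_le_logb_of_le hc₂ (by linarith) hlogn_ge
    rwa [Real.logb_div (ne_of_gt hapos) (by norm_num), hlogba] at hm
  have hLub : Real.logb c₂ (Real.logb c₁ n) ≤ K + (h:ℝ) := by
    have hm : Real.logb c₂ (Real.logb c₁ n) ≤ Real.logb c₂ (2 * c₂ ^ h) :=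
      Real.logb_le_logb_of_le hc₂ hlogn_pos hlog2
    have hp : (0:ℝ) < c₂ ^ h := by positivity
    have hrw : Real.logb c₂ ((c₂:ℝ) ^ h) = (h:ℝ) := by
      rw [← Real.rpow_natCast c₂ h, Real.logb_rpow hc₂0 hc₂1]
    rwa [Real.logb_mul (by norm_num) (ne_of_gt hp), hrw] at hm
  constructor
  · have hK' : Real.logb c₂ (Real.logb c₁ n) ≤ (1+K) * (h:ℝ) := by nlinarith
    rw [div_mul_eq_mul_div, one_mul, div_le_iff₀ (by positivity)]
    linarith [hK']
  · linarith
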